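/- Under a valid edge contraction C_e of Δ with strongly induced subcomplex Γ containing e, for any simplex σ of C_e(Δ) disjoint from C_e(Γ), the intersection C_e(Γ) ∩ st_σ(C_e(Δ)) is the image under the contraction of Γ ∩ st_σ(Δ); in particular if the latter consists of the faces of a single simplex, so does the former. -/

import Mathlib

/-!
The vertex map of the contraction is idempotent, so it fixes `σ ∈ C_e(Δ)` pointwise, and `a ∉ σ`
because `{a} ∈ C_e(Γ)`; hence a simplex of `Δ` contains `σ` as soon as its image does, and the
contraction maps `Γ ∩ st_σ(Δ)` into `C_e(Γ) ∩ st_σ(C_e(Δ))`. Conversely, if `C_e(s₀)` with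
`s₀ ∈ Γ` lies below `C_e(ρ)` with `ρ ∈ st_σ(Δ)`, the part of `ρ` mapping onto `C_e(s₀)` is a
simplex of `Δ` whose vertices all lie in `Γ` (both endpoints of `e` do), hence a simplex of `Γ`,
since strongly induced subcomplexes are induced.
-/

open scoped Classical

namespace Fary

variable {V : Type*}

/-- A simplicial complex: a family of finite sets closed under taking subsets. -/
def IsComplex (K : Set (Finset V)) : Prop := ∀ s ∈ K, ∀ t ⊆ s, t ∈ K

/-- The star of a simplex `σ`: all subsets of simplices of `K` containing `σ`. -/
def star (σ : Finset V) (K : Set (Finset V)) : Set (Finset V) :=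
  {t | ∃ ρ ∈ K, σ ⊆ ρ ∧ t ⊆ ρ}

/-- The set of faces of a single simplex `τ`. -/
def facesOf (τ : Finset V) : Set (Finset V) := {ρ | ρ ⊆ τ}

/-- `Γ` is an induced subcomplex of `Δ`. -/
def Induced (Γ Δ : Set (Finset V)) : Prop :=
  Γ ⊆ Δ ∧ ∀ s ∈ Δ, (∀ v ∈ s, {v} ∈ Γ) → s ∈ Γ

/-- `Γ` is a strongly induced subcomplex of `Δ`: for every simplex of `Δ` not in `Γ`,
the intersection of `Γ` with its star is the set of faces of a single simplex of `Γ`. -/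
def StronglyInduced (Γ Δ : Set (Finset V)) : Prop :=
  Γ ⊆ Δ ∧ ∀ σ ∈ Δ, σ ∉ Γ → ∃ τ ∈ Γ, Γ ∩ star σ Δ = facesOf τ

/-- The derived (barycentric) subdivision: its simplices are the chains (under inclusion)
of nonempty simplices of `Δ`. -/
def derived (Δ : Set (Finset V)) : Set (Finset (Finset V)) :=
  {C | (↑C : Set (Finset V)) ⊆ {s | s ∈ Δ ∧ s.Nonempty} ∧
       IsChain (· ⊆ ·) (↑C : Set (Finset V))}

/-- The biased derived subdivision of a pair `Γ ⊆ Δ`: simplices are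
`τ ∪ {v_{σ₁}, …, v_{σ_k}}` with `τ ∈ Γ`, `σ₁ ⊂ … ⊂ σ_k` simplices of `Δ` not in `Γ`
and `τ ⊆ σ₁`. Old vertices are `Sum.inl`, the new vertex `v_σ` is `Sum.inr σ`. -/
def biased [DecidableEq V] (Γ Δ : Set (Finset V)) : Set (Finset (V ⊕ Finset V)) :=
  {t | ∃ τ ∈ Γ, ∃ C : Finset (Finset V),
    (↑C : Set (Finset V)) ⊆ {s | s ∈ Δ ∧ s ∉ Γ} ∧
    IsChain (· ⊆ ·) (↑C : Set (Finset V)) ∧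
    (∀ s ∈ C, τ ⊆ s) ∧
    t = τ.image Sum.inl ∪ C.image Sum.inr}

/-- The copy of a complex `Γ` over `V` inside the vertex type `V ⊕ Finset V`. -/
def inlify [DecidableEq V] (Γ : Set (Finset V)) : Set (Finset (V ⊕ Finset V)) :=
  {t | ∃ s ∈ Γ, t = s.image Sum.inl}

/-- The vertex map of the edge contraction identifying `b` with `a`. -/
def cmap [DecidableEq V] (a b : V) (v : V) : V := if v = b then a else v

/-- The edge contraction `C_e(K)` at `e = {a,b}`: images of simplices under `cmap a b`. -/
def contract [DecidableEq V] (a b : V) (K : Set (Finset V)) : Set (Finset V) :=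
  {t | ∃ s ∈ K, t = s.image (cmap a b)}

/-- A missing simplex of `K`: not a simplex, but all proper subsets are simplices. -/
def Missing (K : Set (Finset V)) (m : Finset V) : Prop := m ∉ K ∧ ∀ t ⊂ m, t ∈ K

/-- The stellar subdivision of `Δ` at `σ`, with new vertex `none`. -/
def stellar [DecidableEq V] (σ : Finset V) (Δ : Set (Finset V)) : Set (Finset (Option V)) :=
  {t | (∃ s ∈ Δ, ¬ σ ⊆ s ∧ t = s.image some) ∨
       (∃ τ ρ : Finset V, τ ⊂ σ ∧ ρ ∩ σ = ∅ ∧ σ ∪ ρ ∈ Δ ∧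
         t = insert none ((τ ∪ ρ).image some))}

/-- The edge subdivision `S_e` at the edge `e = {a,b}` is the stellar subdivision at `e`. -/
def subdivEdge [DecidableEq V] (a b : V) (K : Set (Finset V)) : Set (Finset (Option V)) :=
  stellar {a, b} K

/-- `s` is a facet (maximal simplex) of `K`. -/
def IsFacet (K : Set (Finset V)) (s : Finset V) : Prop :=
  s ∈ K ∧ ∀ t ∈ K, s ⊆ t → t = s

end Fary

namespace Fary

section

variable {V : Type*}

theorem StronglyInduced.induced {Γ Δ : Set (Finset V)} (hΓ : IsComplex Γ)
    (h : StronglyInduced Γ Δ) : Induced Γ Δ := by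
  refine ⟨h.1, fun s hsΔ hv => ?_⟩
  by_contra hs
  obtain ⟨τ, hτΓ, hτ⟩ := h.2 s hsΔ hs
  refine hs (hΓ τ hτΓ s fun w hw => ?_)
  have hw' : ({w} : Finset V) ∈ Γ ∩ star s Δ :=
    ⟨hv w hw, s, hsΔ, subset_rfl, Finset.singleton_subset_iff.mpr hw⟩
  rw [hτ] at hw'
  exact Finset.singleton_subset_iff.mp hw'

theorem image_facesOf {W : Type*} [DecidableEq W] (f : V → W) (τ : Finset V) :
    {t | ∃ s ∈ facesOf τ, t = s.image f} = facesOf (τ.image f) := by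
  ext t
  constructor
  · rintro ⟨s, hsτ, rfl⟩
    exact Finset.image_subset_image hsτ
  · intro ht
    obtain ⟨s, hsτ, rfl⟩ := Finset.subset_image_iff.mp ht
    exact ⟨s, hsτ, rfl⟩

section Contraction

variable [DecidableEq V] {a b : V}

@[simp]
theorem cmap_left : cmap a b a = a := by
  simp [cmap]

theorem cmap_cmap (v : V) : cmap a b (cmap a b v) = cmap a b v := by
  by_cases hv : v = b <;> simp [cmap, hv]

theorem cmap_eq_self_of_mem_contract {K : Set (Finset V)} {σ : Finset V}
    (hσ : σ ∈ contract a b K) {v : V} (hv : v ∈ σ) : cmap a b v = v := by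
  obtain ⟨s, -, rfl⟩ := hσ
  obtain ⟨w, -, rfl⟩ := Finset.mem_image.mp hv
  exact cmap_cmap w

theorem eq_of_cmap_eq_of_ne {v w : V} (h : cmap a b w = v) (hv : v ≠ a) : w = v := by
  unfold cmap at h
  split_ifs at h
  · exact absurd h.symm hv
  · exact h

theorem cmap_singleton_mem_iff {K : Set (Finset V)} (ha : {a} ∈ K) (hb : {b} ∈ K) (v : V) :
    {cmap a b v} ∈ K ↔ ({v} : Finset V) ∈ K := by
  by_cases hv : v = b
  · subst hv; simp [cmap, ha, hb]
  · simp [cmap, hv]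

theorem image_mem_star_contract {Δ : Set (Finset V)} {σ s : Finset V}
    (hσ : ∀ v ∈ σ, cmap a b v = v) (hs : s ∈ star σ Δ) :
    s.image (cmap a b) ∈ star σ (contract a b Δ) := by
  obtain ⟨ρ, hρΔ, hσρ, hsρ⟩ := hs
  refine ⟨ρ.image (cmap a b), ⟨ρ, hρΔ, rfl⟩, fun v hv => ?_, Finset.image_subset_image hsρ⟩
  exact Finset.mem_image.mpr ⟨v, hσρ hv, hσ v hv⟩

theorem subset_of_subset_image_cmap {σ ρ : Finset V} (haσ : a ∉ σ)
    (h : σ ⊆ ρ.image (cmap a b)) : σ ⊆ ρ := by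
  intro v hv
  obtain ⟨w, hwρ, hw⟩ := Finset.mem_image.mp (h hv)
  rwa [eq_of_cmap_eq_of_ne hw (ne_of_mem_of_not_mem hv haσ)] at hwρ

theorem exists_mem_star_image_eq {Γ Δ : Set (Finset V)} (hΓ : IsComplex Γ) (hΔ : IsComplex Δ)
    (hind : Induced Γ Δ) (ha : {a} ∈ Γ) (hb : {b} ∈ Γ) {σ s₀ : Finset V} (haσ : a ∉ σ)
    (hs₀ : s₀ ∈ Γ) (hstar : s₀.image (cmap a b) ∈ star σ (contract a b Δ)) :
    ∃ s ∈ Γ ∩ star σ Δ, s.image (cmap a b) = s₀.image (cmap a b) := by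
  obtain ⟨_, ⟨ρ, hρΔ, rfl⟩, hσρ, htρ⟩ := hstar
  obtain ⟨s, hsρ, hs⟩ := Finset.subset_image_iff.mp htρ
  have hsΓ : s ∈ Γ := by
    refine hind.2 s (hΔ ρ hρΔ s hsρ) fun w hw => ?_
    have hw' : cmap a b w ∈ s₀.image (cmap a b) := hs ▸ Finset.mem_image_of_mem _ hw
    obtain ⟨u, hu, hwu⟩ := Finset.mem_image.mp hw'
    rw [← cmap_singleton_mem_iff ha hb, ← hwu, cmap_singleton_mem_iff ha hb]
    exact hΓ s₀ hs₀ _ (Finset.singleton_subset_iff.mpr hu)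
  exact ⟨s, ⟨hsΓ, ρ, hρΔ, subset_of_subset_image_cmap haσ hσρ, hsρ⟩, hs⟩

theorem contract_inter_star {Γ Δ : Set (Finset V)} (hΓ : IsComplex Γ) (hΔ : IsComplex Δ)
    (hind : Induced Γ Δ) (ha : {a} ∈ Γ) (hb : {b} ∈ Γ) {σ : Finset V} (haσ : a ∉ σ)
    (hσ : ∀ v ∈ σ, cmap a b v = v) :
    contract a b Γ ∩ star σ (contract a b Δ)
      = {t | ∃ s ∈ Γ ∩ star σ Δ, t = s.image (cmap a b)} := by
  ext t
  constructor
  · rintro ⟨⟨s₀, hs₀, rfl⟩, hstar⟩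
    obtain ⟨s, hs, hst⟩ := exists_mem_star_image_eq hΓ hΔ hind ha hb haσ hs₀ hstar
    exact ⟨s, hs, hst.symm⟩
  · rintro ⟨s, ⟨hsΓ, hsstar⟩, rfl⟩
    exact ⟨⟨s, hsΓ, rfl⟩, image_mem_star_contract hσ hsstar⟩

end Contraction

end

theorem contract_star_inter_general {V : Type*} [DecidableEq V] (Γ Δ : Set (Finset V))
    (hΓ : IsComplex Γ) (hΔ : IsComplex Δ) (hstr : StronglyInduced Γ Δ)
    (a b : V) (he : ({a, b} : Finset V) ∈ Γ)
    (σ : Finset V) (hσ : σ ∈ contract a b Δ)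
    (hdisj : ∀ v ∈ σ, ({v} : Finset V) ∉ contract a b Γ) :
    contract a b Γ ∩ star σ (contract a b Δ)
      = {t | ∃ s ∈ Γ ∩ star σ Δ, t = s.image (cmap a b)} ∧
    (∀ τ ∈ Γ, Γ ∩ star σ Δ = facesOf τ →
      ∃ τ' ∈ contract a b Γ,
        contract a b Γ ∩ star σ (contract a b Δ) = facesOf τ') := by
  have ha : {a} ∈ Γ := hΓ _ he _ (by simp)
  have hb : {b} ∈ Γ := hΓ _ he _ (by simp)
  have haσ : a ∉ σ := fun h => hdisj a h ⟨{a}, ha, by simp⟩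
  have hmain := contract_inter_star hΓ hΔ (hstr.induced hΓ) ha hb haσ
    fun v hv => cmap_eq_self_of_mem_contract hσ hv
  refine ⟨hmain, fun τ hτ hτeq => ⟨τ.image (cmap a b), ⟨τ, hτ, rfl⟩, ?_⟩⟩
  rw [hmain, hτeq, image_facesOf]

/-- for a simplex `σ` of `C_e(Δ)` disjoint from `C_e(Γ)`, the intersection
`C_e(Γ) ∩ st_σ(C_e(Δ))` is the image under the contraction of `Γ ∩ st_σ(Δ)`;
in particular if the latter consists of the faces of a single simplex, so does the
former. -/
theorem contract_star_inter {V : Type*} [DecidableEq V] (Γ Δ : Set (Finset V))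
    (hΓ : IsComplex Γ) (hΔ : IsComplex Δ) (hstr : StronglyInduced Γ Δ)
    (a b : V) (hab : a ≠ b) (he : ({a, b} : Finset V) ∈ Γ)
    (hvalid : ¬ ∃ m : Finset V, Missing Γ m ∧ ({a, b} : Finset V) ⊆ m)
    (σ : Finset V) (hσ : σ ∈ contract a b Δ)
    (hdisj : ∀ v ∈ σ, ({v} : Finset V) ∉ contract a b Γ) :
    contract a b Γ ∩ star σ (contract a b Δ)
      = {t | ∃ s ∈ Γ ∩ star σ Δ, t = s.image (cmap a b)} ∧
    (∀ τ ∈ Γ, Γ ∩ star σ Δ = facesOf τ →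
      ∃ τ' ∈ contract a b Γ,
        contract a b Γ ∩ star σ (contract a b Δ) = facesOf τ') :=
  contract_star_inter_general Γ Δ hΓ hΔ hstr a b he σ hσ hdisj

end Fary
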